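/- (Uniform-Gronwall-type estimate with integrally small perturbation of the decay rate, used in (4.82)–(4.83).) Let τ ≤ T be real numbers and let a, ξ, C_ξ be constants with a > ξ ≥ 0 and C_ξ ≥ 0. Let y : ℝ → ℝ be nonnegative and differentiable on [τ,T], let h : ℝ → ℝ be nonnegative and integrable on [τ,T] with ∫_s^t h(r) dr ≤ ξ(t−s) + C_ξ for all τ ≤ s ≤ t ≤ T, and let F : ℝ → ℝ be nonnegative and continuous on [τ,T]. If y'(s) ≤ −(a − h(s))·y(s) + F(s) for every s ∈ [τ,T], then for every t ∈ [τ,T], y(t) ≤ exp(C_ξ)·[exp(−(a−ξ)(t−τ))·y(τ) + ∫_τ^t exp(−(a−ξ)(t−s))·F(s) ds]. -/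

import Mathlib

/-!
Multiplying by `exp (a s)` turns the differential inequality into the integral inequality
`u v ≤ u τ + ∫_τ^v (h u + f)` for `u = exp (a s) y` and `f = exp (a s) F`. Since `h` is merely
integrable, the integrating factor `exp (-∫ h)` is only absolutely continuous, and `u` need not be,
so Gronwall's argument is run on the majorant `Z v = u τ + ∫_τ^v (h u + f)`: the product
`Z exp (-∫ h)` is absolutely continuous with derivative at most `f exp (-∫ h)` almost everywhere.
The bound `∫_s^t h ≤ ξ (t - s) + Cξ` then controls the resulting kernel.
-/

open MeasureTheory Set Filter intervalIntegral

theorem LipschitzOnWith.comp_absolutelyContinuousOnInterval {X Y : Type*} [PseudoMetricSpace X]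
    [PseudoMetricSpace Y] {g : X → Y} {f : ℝ → X} {K : NNReal} {s : Set X} {a b : ℝ}
    (hg : LipschitzOnWith K g s) (hf : AbsolutelyContinuousOnInterval f a b)
    (hfs : MapsTo f (uIcc a b) s) :
    AbsolutelyContinuousOnInterval (g ∘ f) a b := by
  have hlim := Tendsto.const_mul (K : ℝ) hf
  rw [mul_zero] at hlim
  refine squeeze_zero' (Eventually.of_forall fun _ => Finset.sum_nonneg fun _ _ => dist_nonneg)
    ?_ hlim
  filter_upwards [mem_inf_of_right (mem_principal_self _)] with E hE
  rw [Finset.mul_sum]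
  exact Finset.sum_le_sum fun i hi =>
    hg.dist_le_mul _ (hfs (hE.1 i hi).1) _ (hfs (hE.1 i hi).2)

theorem AbsolutelyContinuousOnInterval.comp_contDiff {g : ℝ → ℝ} {f : ℝ → ℝ} {a b : ℝ}
    (hg : ContDiff ℝ 1 g) (hf : AbsolutelyContinuousOnInterval f a b) :
    AbsolutelyContinuousOnInterval (fun x => g (f x)) a b := by
  obtain ⟨C, hC⟩ := hf.exists_bound
  obtain ⟨K, hK⟩ := hg.contDiffOn.exists_lipschitzOnWith one_ne_zero (convex_closedBall 0 C)
    (isCompact_closedBall 0 C)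
  exact hK.comp_absolutelyContinuousOnInterval hf fun x hx => by simpa using hC x hx

theorem integral_gronwall {u k f : ℝ → ℝ} {a b : ℝ} (hab : a ≤ b)
    (hu : ContinuousOn u (Icc a b)) (hk : IntegrableOn k (Icc a b))
    (hk_nonneg : ∀ s ∈ Icc a b, 0 ≤ k s) (hf : IntegrableOn f (Icc a b))
    (hle : ∀ s ∈ Icc a b, u s ≤ u a + ∫ r in a..s, k r * u r + f r) :
    u b ≤ Real.exp (∫ r in a..b, k r) * u a
      + ∫ s in a..b, Real.exp (∫ r in s..b, k r) * f s := by
  rw [← uIcc_of_le hab] at hu hk hf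
  have hkuf : IntervalIntegrable (fun r => k r * u r + f r) volume a b :=
    ((hk.mul_continuousOn hu isCompact_uIcc).add hf).intervalIntegrable
  set K := fun s => ∫ r in a..s, k r
  set Z := fun s => u a + ∫ r in a..s, k r * u r + f r
  set W := fun s => Z s * Real.exp (-K s)
  have hK_ac : AbsolutelyContinuousOnInterval K a b :=
    hk.intervalIntegrable.absolutelyContinuousOnInterval_intervalIntegral left_mem_uIcc
  have hE_ac : AbsolutelyContinuousOnInterval (fun s => Real.exp (-K s)) a b :=
    hK_ac.fun_neg.comp_contDiff Real.contDiff_exp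
  have hZ_ac : AbsolutelyContinuousOnInterval Z a b :=
    (LipschitzWith.const (u a)).lipschitzOnWith.absolutelyContinuousOnInterval.add
      (hkuf.absolutelyContinuousOnInterval_intervalIntegral left_mem_uIcc)
  have hW_ac : AbsolutelyContinuousOnInterval W a b := hZ_ac.fun_mul hE_ac
  have hW_deriv : ∀ᵐ s, s ∈ Icc a b → deriv W s ≤ f s * Real.exp (-K s) := by
    filter_upwards [hkuf.ae_hasDerivAt_integral, hk.intervalIntegrable.ae_hasDerivAt_integral]
      with s hZ hK hs
    have hs' : s ∈ uIcc a b := uIcc_of_le hab ▸ hs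
    have hkZ : k s * u s ≤ k s * Z s := mul_le_mul_of_nonneg_left (hle s hs) (hk_nonneg s hs)
    have hWd : HasDerivAt W
        ((k s * u s + f s) * Real.exp (-K s) + Z s * (Real.exp (-K s) * -k s)) s :=
      ((hZ hs' a left_mem_uIcc).const_add (u a)).fun_mul (hK hs' a left_mem_uIcc).fun_neg.exp
    rw [hWd.deriv]
    linarith [mul_le_mul_of_nonneg_right hkZ (Real.exp_pos (-K s)).le]
  have hWab : W b - W a ≤ ∫ s in a..b, f s * Real.exp (-K s) := by
    rw [← hW_ac.integral_deriv_eq_sub]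
    exact integral_mono_ae_restrict hab hW_ac.intervalIntegrable_deriv
      (hf.intervalIntegrable.mul_continuousOn hE_ac.continuousOn)
      ((ae_restrict_iff' measurableSet_Icc).2 hW_deriv)
  have hWa : W a = u a := by simp [W, Z, K]
  have hZb : Z b = W b * Real.exp (K b) := by
    simp only [W, mul_assoc, ← Real.exp_add, neg_add_cancel, Real.exp_zero, mul_one]
  have hkernel : ∀ s ∈ uIcc a b,
      f s * Real.exp (-K s) * Real.exp (K b) = Real.exp (∫ r in s..b, k r) * f s := by
    intro s hs
    rw [← integral_interval_sub_left hk.intervalIntegrable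
      (hk.mono_set (uIcc_subset_uIcc left_mem_uIcc hs)).intervalIntegrable, sub_eq_add_neg,
      Real.exp_add]
    ring
  calc u b ≤ Z b := hle b ⟨hab, le_rfl⟩
    _ ≤ (u a + ∫ s in a..b, f s * Real.exp (-K s)) * Real.exp (K b) := by
      rw [hZb]; gcongr; linarith
    _ = _ := by
      rw [add_mul, ← intervalIntegral.integral_mul_const, mul_comm (u a), integral_congr hkernel]

theorem le_exp_integral_mul_add_of_hasDerivAt {y y' h F : ℝ → ℝ} {a τ t : ℝ} (hτt : τ ≤ t)
    (hy : ∀ s ∈ Icc τ t, HasDerivAt y (y' s) s) (hh : IntegrableOn h (Icc τ t))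
    (hh_nonneg : ∀ s ∈ Icc τ t, 0 ≤ h s) (hF : IntegrableOn F (Icc τ t))
    (hineq : ∀ s ∈ Icc τ t, y' s ≤ -(a - h s) * y s + F s) :
    y t ≤ Real.exp ((∫ r in τ..t, h r) - a * (t - τ)) * y τ
      + ∫ s in τ..t, Real.exp ((∫ r in s..t, h r) - a * (t - s)) * F s := by
  set u := fun s => Real.exp (a * s) * y s
  have hu_deriv : ∀ s ∈ Icc τ t,
      HasDerivAt u (Real.exp (a * s) * (a * y s + y' s)) s := fun s hs =>
    (((hasDerivAt_id s).const_mul a).exp.mul (hy s hs)).congr_deriv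
      (by simp only [id, mul_one]; ring)
  have hu_cont : ContinuousOn u (Icc τ t) := fun s hs =>
    (hu_deriv s hs).continuousAt.continuousWithinAt
  have hexpF : IntegrableOn (fun s => Real.exp (a * s) * F s) (Icc τ t) :=
    hF.continuousOn_mul (by fun_prop) isCompact_Icc
  have hle : ∀ v ∈ Icc τ t, u v ≤ u τ + ∫ r in τ..v, h r * u r + Real.exp (a * r) * F r := by
    intro v hv
    have hsub : Icc τ v ⊆ Icc τ t := Icc_subset_Icc_right hv.2
    have := sub_le_integral_of_hasDeriv_right_of_le
      (φ := fun r => h r * u r + Real.exp (a * r) * F r) hv.1 (hu_cont.mono hsub)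
      (fun s hs => (hu_deriv s (hsub (Ioo_subset_Icc_self hs))).hasDerivWithinAt)
      (((hh.mul_continuousOn hu_cont isCompact_Icc).add hexpF).mono_set hsub)
      (fun s hs => by
        have := mul_le_mul_of_nonneg_left (hineq s (hsub (Ioo_subset_Icc_self hs)))
          (Real.exp_pos (a * s)).le
        simp only [u]; linarith)
    linarith
  have hshift : ∀ c s,
      Real.exp (c - a * (t - s)) = Real.exp (-(a * t)) * Real.exp c * Real.exp (a * s) :=
    fun c s => by rw [← Real.exp_add, ← Real.exp_add]; ring_nf
  calc y t = Real.exp (-(a * t)) * u t := by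
        simp only [u, ← mul_assoc, ← Real.exp_add, neg_add_cancel, Real.exp_zero, one_mul]
    _ ≤ Real.exp (-(a * t)) * (Real.exp (∫ r in τ..t, h r) * u τ
          + ∫ s in τ..t, Real.exp (∫ r in s..t, h r) * (Real.exp (a * s) * F s)) := by
        gcongr
        exact integral_gronwall hτt hu_cont hh hh_nonneg hexpF hle
    _ = _ := by
        simp only [hshift, u, mul_add, ← intervalIntegral.integral_const_mul]
        ring_nf

theorem stmt_9_general (τ T : ℝ) (a ξ Cξ : ℝ)
    (y y' h F : ℝ → ℝ)
    (hy_nonneg : ∀ s ∈ Icc τ T, 0 ≤ y s)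
    (hy : ∀ s ∈ Icc τ T, HasDerivAt y (y' s) s)
    (hh_nonneg : ∀ s ∈ Icc τ T, 0 ≤ h s)
    (hh_int : IntegrableOn h (Icc τ T))
    (hh_bound : ∀ s t : ℝ, τ ≤ s → s ≤ t → t ≤ T → (∫ r in s..t, h r) ≤ ξ*(t-s) + Cξ)
    (hF_nonneg : ∀ s ∈ Icc τ T, 0 ≤ F s)
    (hF_cont : ContinuousOn F (Icc τ T))
    (hineq : ∀ s ∈ Icc τ T, y' s ≤ -(a - h s) * y s + F s) :
    ∀ t ∈ Icc τ T,
      y t ≤ Real.exp Cξ * (Real.exp (-(a-ξ)*(t-τ)) * y τ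
        + ∫ s in τ..t, Real.exp (-(a-ξ)*(t-s)) * F s) := by
  intro t ht
  have hsub : Icc τ t ⊆ Icc τ T := Icc_subset_Icc_right ht.2
  have hexp_le : ∀ s ∈ Icc τ t, Real.exp ((∫ r in s..t, h r) - a * (t - s))
      ≤ Real.exp Cξ * Real.exp (-(a - ξ) * (t - s)) := fun s hs => by
    rw [← Real.exp_add, Real.exp_le_exp]
    linarith [hh_bound s t (hsub hs).1 hs.2 ht.2]
  refine (le_exp_integral_mul_add_of_hasDerivAt ht.1 (fun s hs => hy s (hsub hs))
    (hh_int.mono_set hsub) (fun s hs => hh_nonneg s (hsub hs))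
    ((hF_cont.mono hsub).integrableOn_Icc) (fun s hs => hineq s (hsub hs))).trans ?_
  rw [mul_add, ← mul_assoc, ← intervalIntegral.integral_const_mul]
  gcongr ?_ + ?_
  · exact mul_le_mul_of_nonneg_right (hexp_le τ ⟨le_rfl, ht.1⟩)
      (hy_nonneg τ ⟨le_rfl, ht.1.trans ht.2⟩)
  · rw [intervalIntegral.integral_of_le ht.1, intervalIntegral.integral_of_le ht.1]
    refine integral_mono_of_nonneg (ae_restrict_of_forall_mem measurableSet_Ioc fun s hs =>
      mul_nonneg (Real.exp_pos _).le (hF_nonneg s (hsub (Ioc_subset_Icc_self hs)))) ?_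
      (ae_restrict_of_forall_mem measurableSet_Ioc fun s hs => ?_)
    · have hF : ContinuousOn F (Icc τ t) := hF_cont.mono hsub
      exact (ContinuousOn.integrableOn_Icc (by fun_prop)).mono_set Ioc_subset_Icc_self
    · dsimp only
      rw [← mul_assoc]
      exact mul_le_mul_of_nonneg_right (hexp_le s (Ioc_subset_Icc_self hs))
        (hF_nonneg s (hsub (Ioc_subset_Icc_self hs)))

/-- Uniform-Gronwall-type estimate with integrally small perturbation of the
decay rate. -/
theorem stmt_9 (τ T : ℝ) (hτT : τ ≤ T) (a ξ Cξ : ℝ)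
    (haξ : ξ < a) (hξ : 0 ≤ ξ) (hCξ : 0 ≤ Cξ)
    (y y' h F : ℝ → ℝ)
    (hy_nonneg : ∀ s ∈ Icc τ T, 0 ≤ y s)
    (hy : ∀ s ∈ Icc τ T, HasDerivAt y (y' s) s)
    (hh_nonneg : ∀ s ∈ Icc τ T, 0 ≤ h s)
    (hh_int : IntegrableOn h (Icc τ T))
    (hh_bound : ∀ s t : ℝ, τ ≤ s → s ≤ t → t ≤ T → (∫ r in s..t, h r) ≤ ξ*(t-s) + Cξ)
    (hF_nonneg : ∀ s ∈ Icc τ T, 0 ≤ F s)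
    (hF_cont : ContinuousOn F (Icc τ T))
    (hineq : ∀ s ∈ Icc τ T, y' s ≤ -(a - h s) * y s + F s) :
    ∀ t ∈ Icc τ T,
      y t ≤ Real.exp Cξ * (Real.exp (-(a-ξ)*(t-τ)) * y τ
        + ∫ s in τ..t, Real.exp (-(a-ξ)*(t-s)) * F s) :=
  stmt_9_general τ T a ξ Cξ y y' h F hy_nonneg hy hh_nonneg hh_int hh_bound hF_nonneg hF_cont hineq
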